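/- Let D be a bounded Lipschitz domain, Γ ⊂ D a simple closed Lipschitz curve, ψ ∈ C^{1,1}(D) a full obstacle, g ∈ H^{1/2}(Γ), and h a continuous function on Γ. For ε ≥ 0 let v_ε denote the solution of the mixed obstacle problem on D with full obstacle ψ, thin obstacle g_ε = g + ε·h on Γ (and boundary datum agreeing with ψ on ∂D). Then there is a constant C depending only on D and Γ such that ‖v_ε − v₀‖_{L^∞(D)} ≤ C·ε·‖h‖_{L^∞(Γ)} as ε → 0. -/

import Mathlib

open MeasureTheory Metric Set Filter Topology

noncomputable section

namespace RandomZeros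

/-- The logarithmic potential `U^μ(z) = ∫ log|z−w| dμ(w)` of a measure on `ℂ`. -/
def logPot (μ : Measure ℂ) (z : ℂ) : ℝ :=
  ∫ w, Real.log (‖z - w‖) ∂μ

/-- The logarithmic energy `Σ(μ) = ∫∫ log|z−w| dμ dμ`. -/
def logEnergy (μ : Measure ℂ) : ℝ :=
  ∫ z, logPot μ z ∂μ

/-- `μ` has finite logarithmic energy. -/
def FiniteLogEnergy (μ : Measure ℂ) : Prop :=
  Integrable (fun p : ℂ × ℂ => Real.log (‖p.1 - p.2‖)) (μ.prod μ)

/-- Support of a measure on `ℂ`. -/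
def msupport (μ : Measure ℂ) : Set ℂ :=
  {z | ∀ U ∈ nhds z, μ U ≠ 0}

/-- `μ` is compactly supported. -/
def HasCompactSupportM (μ : Measure ℂ) : Prop :=
  ∃ K : Set ℂ, IsCompact K ∧ μ Kᶜ = 0

/-- `B_α(μ) = sup_z (U^μ(z) − |z|²/(2α))`. -/
def Bsup (α : ℝ) (μ : Measure ℂ) : ℝ :=
  ⨆ z : ℂ, (logPot μ z - ‖z‖ ^ 2 / (2 * α))

/-- The Zeitouni–Zelditch functional `I_α(μ) = −Σ(μ) + 2 B_α(μ)`. -/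
def Ifun (α : ℝ) (μ : Measure ℂ) : ℝ :=
  -logEnergy μ + 2 * Bsup α μ

/-- The class `M_G` of compactly supported probability measures of finite
logarithmic energy giving no mass to `G`. -/
def MG (G : Set ℂ) : Set (Measure ℂ) :=
  {μ | IsProbabilityMeasure μ ∧ HasCompactSupportM μ ∧ FiniteLogEnergy μ ∧ μ G = 0}

/-- `μ` is the minimizer `μ_{α,G}` of `I_α` over `M_G`. -/
def IsMinimizer (α : ℝ) (G : Set ℂ) (μ : Measure ℂ) : Prop :=
  μ ∈ MG G ∧ ∀ μ' ∈ MG G, Ifun α μ ≤ Ifun α μ'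

/-- Subharmonicity on a set: upper semicontinuity plus the sub-mean value
inequality on circles. -/
def SubharmonicOn (u : ℂ → ℝ) (Ω : Set ℂ) : Prop :=
  UpperSemicontinuousOn u Ω ∧
  ∀ z ∈ Ω, ∀ r : ℝ, 0 < r → closedBall z r ⊆ Ω →
    u z ≤ (2 * Real.pi)⁻¹ *
      ∫ θ in (0:ℝ)..(2 * Real.pi), u (z + (r : ℂ) * Complex.exp ((θ : ℂ) * Complex.I))

/-- `Ω` is a (subharmonic) quadrature domain with respect to the finite positive
measure `ν`. -/
def IsQuadratureDomain (Ω : Set ℂ) (ν : Measure ℂ) : Prop :=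
  IsOpen Ω ∧ msupport ν ⊆ Ω ∧
  ∀ u : ℂ → ℝ, SubharmonicOn u Ω → IntegrableOn u Ω volume →
    ∫ z, u z ∂ν ≤ Real.pi⁻¹ * ∫ z in Ω, u z

/-- `b = Bal(ν, Gᶜ)`: the balayage of `ν` onto `∂G`, a measure supported on the
boundary of `G`, of the same total mass, whose logarithmic potential agrees with
that of `ν` outside the closure of `G`. -/
def IsBalayage (ν : Measure ℂ) (G : Set ℂ) (b : Measure ℂ) : Prop :=
  b (frontier G)ᶜ = 0 ∧ b univ = ν univ ∧
  ∀ z ∈ (closure G)ᶜ, logPot b z = logPot ν z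

/-- A Jordan domain: a bounded connected open set whose boundary is a Jordan
curve. -/
def IsJordanDomain (G : Set ℂ) : Prop :=
  IsOpen G ∧ Bornology.IsBounded G ∧ IsConnected G ∧
  ∃ γ : ℝ → ℂ, Continuous γ ∧ Function.Periodic γ 1 ∧
    Set.InjOn γ (Set.Ico 0 1) ∧ frontier G = Set.range γ

/-- A Jordan domain with `C²`-smooth boundary. -/
def IsC2JordanDomain (G : Set ℂ) : Prop :=
  IsOpen G ∧ Bornology.IsBounded G ∧ IsConnected G ∧
  ∃ γ : ℝ → ℂ, ContDiff ℝ 2 γ ∧ Function.Periodic γ 1 ∧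
    Set.InjOn γ (Set.Ico 0 1) ∧ (∀ t, deriv γ t ≠ 0) ∧ frontier G = Set.range γ

/-- A bounded Lipschitz domain: near each boundary point the boundary is the
graph of a Lipschitz function, after a rotation. -/
def IsLipschitzDomain (D : Set ℂ) : Prop :=
  IsOpen D ∧ Bornology.IsBounded D ∧ D.Nonempty ∧
  ∀ z ∈ frontier D, ∃ r : ℝ, 0 < r ∧ ∃ ρ : ℂ, ‖ρ‖ = 1 ∧
    ∃ (f : ℝ → ℝ) (K : NNReal), LipschitzWith K f ∧
      ∀ w ∈ frontier D ∩ ball z r, (ρ * (w - z)).im = f ((ρ * (w - z)).re)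

/-- A simple closed Lipschitz curve. -/
def IsSimpleClosedLipschitzCurve (Γ : Set ℂ) : Prop :=
  ∃ γ : ℝ → ℂ, (∃ K : NNReal, LipschitzWith K γ) ∧ Function.Periodic γ 1 ∧
    Set.InjOn γ (Set.Ico 0 1) ∧ Γ = Set.range γ

/-- Data exhibiting the boundary of `G` as a piecewise `C²`-smooth Jordan curve
without cusps, made of `n+1` arcs meeting at interior angles `π·(angle j)` with
`angle j ∈ (0,2)` (cusps, i.e. angles `0` and `2π`, are excluded). -/
structure PiecewiseC2Data (G : Set ℂ) where
  n : ℕ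
  arc : Fin (n + 1) → ℝ → ℂ
  smooth : ∀ j, ContDiffOn ℝ 2 (arc j) (Set.Icc 0 1)
  deriv_ne : ∀ j, ∀ t ∈ Set.Icc (0:ℝ) 1, derivWithin (arc j) (Set.Icc 0 1) t ≠ 0
  inj : ∀ j, Set.InjOn (arc j) (Set.Icc 0 1)
  joins : ∀ j, arc j 1 = arc (j + 1) 0
  covers : frontier G = ⋃ j, arc j '' Set.Icc 0 1
  angle : Fin (n + 1) → ℝ
  angle_pos : ∀ j, 0 < angle j
  angle_lt_two : ∀ j, angle j < 2
  angle_spec : ∀ j,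
    Complex.arg (derivWithin (arc (j + 1)) (Set.Icc 0 1) 0 /
      derivWithin (arc j) (Set.Icc 0 1) 1) = Real.pi * (1 - angle j)

/-- The set of corner points (interior angle `≠ π`). -/
def PiecewiseC2Data.corners {G : Set ℂ} (P : PiecewiseC2Data G) : Set ℂ :=
  {z | ∃ j, z = P.arc j 1 ∧ P.angle j ≠ 1}

/-- The set `E₀` of corner points with interior angle `πσ`, `σ ∈ (0,1)`. -/
def PiecewiseC2Data.acuteCorners {G : Set ℂ} (P : PiecewiseC2Data G) : Set ℂ :=
  {z | ∃ j, z = P.arc j 1 ∧ P.angle j < 1}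

/-- An analytic cross-cut of `G`: an analytic simple arc inside `G` joining two
boundary points. -/
def IsAnalyticCrossCut (G A : Set ℂ) : Prop :=
  ∃ γ : ℝ → ℂ, AnalyticOn ℝ γ (Set.Icc 0 1) ∧ Set.InjOn γ (Set.Icc 0 1) ∧
    γ 0 ∈ frontier G ∧ γ 1 ∈ frontier G ∧ (∀ t ∈ Set.Ioo (0:ℝ) 1, γ t ∈ G) ∧
    A = γ '' Set.Ioo 0 1

/-- `ν` has regular support in the closure of `G`: its support is contained in
finitely many analytic cross-cuts together with countably many points, meeting
`∂G` only at corner points. -/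
def HasRegularSupportIn (ν : Measure ℂ) (G : Set ℂ) (corners : Set ℂ) : Prop :=
  ∃ (m : ℕ) (A : Fin m → Set ℂ) (Pts : Set ℂ),
    (∀ j, IsAnalyticCrossCut G (A j)) ∧ Pts.Countable ∧
    msupport ν ⊆ (⋃ j, A j) ∪ Pts ∧
    (((⋃ j, A j) ∪ Pts) ∩ frontier G) ⊆ corners

/-- The Laplacian of a twice differentiable function on `ℂ ≅ ℝ²`. -/
def lap (φ : ℂ → ℝ) (z : ℂ) : ℝ :=
  iteratedFDeriv ℝ 2 φ z ![(1 : ℂ), 1] + iteratedFDeriv ℝ 2 φ z ![Complex.I, Complex.I]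

/-- `μ` is the Riesz mass `(1/(2π))Δv` of `v` on `D`, in the sense of
distributions. -/
def IsRieszMassOn (v : ℂ → ℝ) (μ : Measure ℂ) (D : Set ℂ) : Prop :=
  ∀ φ : ℂ → ℝ, ContDiff ℝ (⊤ : ℕ∞) φ → HasCompactSupport φ → tsupport φ ⊆ D →
    ∫ z, v z * lap φ z = 2 * Real.pi * ∫ z, φ z ∂μ

/-- Euclidean dot product of the gradients of `u` and `v` at `z`. -/
def gradDot (u v : ℂ → ℝ) (z : ℂ) : ℝ :=
  fderiv ℝ u z 1 * fderiv ℝ v z 1 + fderiv ℝ u z Complex.I * fderiv ℝ v z Complex.I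

/-- The Dirichlet energy `𝒟(u) = ∫_D |∇u|² dA`. -/
def dirichletEnergy (D : Set ℂ) (u : ℂ → ℝ) : ℝ :=
  ∫ z in D, gradDot u u z

/-- `ψ` is `C^{1,1}` on `s`. -/
def IsC11On (ψ : ℂ → ℝ) (s : Set ℂ) : Prop :=
  ContDiffOn ℝ 1 ψ s ∧ ∃ K : NNReal, LipschitzOnWith K (fun z => fderiv ℝ ψ z) s

/-- Membership in the admissible class `K^f_{ψ,g}` of the mixed obstacle problem
(subharmonic representatives). -/
def InObstacleClass (D Γ : Set ℂ) (ψ g f : ℂ → ℝ) (u : ℂ → ℝ) : Prop :=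
  SubharmonicOn u D ∧ (∀ z ∈ D, u z ≤ ψ z) ∧ (∀ z ∈ Γ, u z ≤ g z) ∧
  ∀ z ∈ frontier D, u z = f z

/-- `v` solves the mixed obstacle problem with full obstacle `ψ`, thin obstacle
`g` on `Γ`, and boundary datum `f`: it is the upper envelope of the subharmonic
members of the admissible class. -/
def IsMixedObstacleSolution (D Γ : Set ℂ) (ψ g f : ℂ → ℝ) (v : ℂ → ℝ) : Prop :=
  InObstacleClass D Γ ψ g f v ∧
  ∀ u : ℂ → ℝ, InObstacleClass D Γ ψ g f u → ∀ z ∈ D, u z ≤ v z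

/-- The class `SH₁(ℂ)` of entire subharmonic functions of growth
`v(z) = log|z| + O(1)`. -/
def MemSH1 (v : ℂ → ℝ) : Prop :=
  SubharmonicOn v Set.univ ∧
  ∃ C : ℝ, ∀ z : ℂ, 2 ≤ ‖z‖ → |v z - Real.log (‖z‖)| ≤ C

/-- The standard complex Gaussian law `N_ℂ(0,1)` on `ℂ`, with density
`π⁻¹ e^{−|z|²}` with respect to area measure. -/
def stdComplexGaussian : Measure ℂ :=
  volume.withDensity fun z => ENNReal.ofReal (Real.pi⁻¹ * Real.exp (-(‖z‖ ^ 2)))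

/-- The Gaussian Entire Function `F_L(z) = Σ ξ_n (Lz)^n / √(n!)`. -/
def GEF (ξ : ℕ → ℂ) (L : ℝ) (z : ℂ) : ℂ :=
  ∑' n : ℕ, ξ n * ((L : ℂ) * z) ^ n / (Real.sqrt (Nat.factorial n) : ℂ)

-- The multiplicity of `z` as a zero of `F`.
open Classical in
def zeroMult (F : ℂ → ℂ) (z : ℂ) : ℕ :=
  if h : AnalyticAt ℂ F z then (analyticOrderAt F z).toNat else 0

/-- The linear statistic `n(f) = Σ_{F(w)=0} f(w)` of the zeros (with
multiplicity) of `F`. -/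
def zeroStat (F : ℂ → ℂ) (f : ℂ → ℝ) : ℝ :=
  ∑' z : ℂ, f z * (zeroMult F z : ℝ)

/-- The hole event: `F_L` has no zeros in `G`. -/
def holeEvent {Ω : Type*} (ξ : ℕ → Ω → ℂ) (L : ℝ) (G : Set ℂ) : Set Ω :=
  {ω | ∀ z ∈ G, GEF (fun n => ξ n ω) L z ≠ 0}

/-- `G` is disk-like with center `z₀` and radius `r`. -/
def IsDiskLike (G : Set ℂ) (z₀ : ℂ) (r : ℝ) : Prop :=
  0 < r ∧ z₀ ∈ G ∧ ∃ φ : ℂ → ℂ,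
    DifferentiableOn ℂ φ G ∧ Set.BijOn φ G (ball 0 1) ∧ φ z₀ = 0 ∧
    deriv φ z₀ = (r : ℂ)⁻¹ ∧
    ∀ z ∈ G,
      ‖z - z₀‖ / r *
        Real.exp (-(‖z - z₀‖ ^ 2) / (2 * Real.exp 1 * r ^ 2)) ≤
      ‖φ z‖

lemma comparison (D Γ : Set ℂ) (hDo : IsOpen D) (hΓD : Γ ⊆ D)
    (ψ g₁ g₂ v₁ v₂ : ℂ → ℝ) (c : ℝ) (hc : 0 ≤ c)
    (h1 : IsMixedObstacleSolution D Γ ψ g₁ ψ v₁)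
    (h2 : IsMixedObstacleSolution D Γ ψ g₂ ψ v₂)
    (hg : ∀ z ∈ Γ, g₁ z ≤ g₂ z + c) :
    ∀ z ∈ D, v₁ z - c ≤ v₂ z := by
  classical
  set u : ℂ → ℝ := fun z => if z ∈ D then v₁ z - c else ψ z with hu
  have hud : ∀ z ∈ D, u z = v₁ z - c := fun z hz => if_pos hz
  obtain ⟨⟨⟨husc, hmean⟩, hψ1, hΓ1, _⟩, _⟩ := h1
  have hcls : InObstacleClass D Γ ψ g₂ ψ u := by
    refine ⟨⟨?_, ?_⟩, ?_, ?_, ?_⟩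
    · intro z hz y hy
      rw [hud z hz] at hy
      filter_upwards [husc z hz (y + c) (by linarith), self_mem_nhdsWithin] with x hx hxD
      rw [hud x hxD]; linarith
    · intro z hz r hr hball
      have hmem : ∀ θ : ℝ, z + (r : ℂ) * Complex.exp ((θ : ℂ) * Complex.I) ∈ D := by
        intro θ
        apply hball
        simp only [Metric.mem_closedBall, Complex.dist_eq, add_sub_cancel_left, norm_mul,
          Complex.norm_real, Real.norm_eq_abs, Complex.norm_exp_ofReal_mul_I, mul_one]
        exact le_of_eq (abs_of_pos hr)
      have hcong : Set.EqOn (fun θ : ℝ => u (z + (r : ℂ) * Complex.exp ((θ : ℂ) * Complex.I)))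
          (fun θ : ℝ => v₁ (z + (r : ℂ) * Complex.exp ((θ : ℂ) * Complex.I)) - c)
          (Set.uIcc (0:ℝ) (2 * Real.pi)) := fun θ _ => hud _ (hmem θ)
      rw [hud z hz, intervalIntegral.integral_congr hcong]
      have hv := hmean z hz r hr hball
      by_cases hI : IntervalIntegrable
          (fun θ : ℝ => v₁ (z + (r : ℂ) * Complex.exp ((θ : ℂ) * Complex.I)))
          MeasureTheory.volume 0 (2 * Real.pi)
      · rw [intervalIntegral.integral_sub hI (intervalIntegrable_const),
          intervalIntegral.integral_const]
        have hpi : (0:ℝ) < 2 * Real.pi := by positivity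
        have h2pi : (2 * Real.pi)⁻¹ * (2 * Real.pi) = 1 := inv_mul_cancel₀ (ne_of_gt hpi)
        rw [mul_sub, smul_eq_mul, sub_zero, ← mul_assoc, h2pi, one_mul]
        linarith
      · have hI' : ¬ IntervalIntegrable
            (fun θ : ℝ => v₁ (z + (r : ℂ) * Complex.exp ((θ : ℂ) * Complex.I)) - c)
            MeasureTheory.volume 0 (2 * Real.pi) := by
          intro H
          have := H.add (intervalIntegrable_const (c := c))
          exact hI (by simpa using this)
        rw [intervalIntegral.integral_undef hI', mul_zero]
        rw [intervalIntegral.integral_undef hI, mul_zero] at hv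
        linarith
    · intro z hz
      rw [hud z hz]
      have := hψ1 z hz; linarith
    · intro z hz
      rw [hud z (hΓD hz)]
      have := hΓ1 z hz
      have := hg z hz
      linarith
    · intro z hz
      have hzD : z ∉ D := by
        rw [hDo.frontier_eq] at hz
        exact hz.2
      exact if_neg hzD
  intro z hz
  have := h2.2 u hcls z hz
  rw [hud z hz] at this
  exact this

/-- Linear `L^∞`-stability of the mixed obstacle problem under
perturbation of the thin obstacle: `‖v_ε − v₀‖_{L^∞(D)} ≤ C·ε·‖h‖_{L^∞(Γ)}` as
`ε → 0`, with `C` depending only on `D` and `Γ`. -/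
theorem linfty_stability_of_thin_obstacle
    (D Γ : Set ℂ) (hD : IsLipschitzDomain D)
    (hΓ : IsSimpleClosedLipschitzCurve Γ) (hΓD : Γ ⊆ D) :
    ∃ C : ℝ, 0 < C ∧
      ∀ (ψ g h : ℂ → ℝ), IsC11On ψ D → ContinuousOn h Γ →
      ∀ v : ℝ → ℂ → ℝ,
        (∀ ε : ℝ, 0 ≤ ε →
          IsMixedObstacleSolution D Γ ψ (fun z => g z + ε * h z) ψ (v ε)) →
        ∃ ε₀ : ℝ, 0 < ε₀ ∧ ∀ ε : ℝ, 0 ≤ ε → ε ≤ ε₀ →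
          ∀ z ∈ D, |v ε z - v 0 z| ≤ C * ε * (⨆ w : Γ, |h w|) := by
  obtain ⟨hDo, -, -, -⟩ := hD
  obtain ⟨γ, ⟨K, hK⟩, hper, -, hΓeq⟩ := hΓ
  refine ⟨1, one_pos, ?_⟩
  intro ψ g h hψ hh v hv
  refine ⟨1, one_pos, ?_⟩
  intro ε hε _
  have hΓcomp : IsCompact Γ := by
    rw [hΓeq, ← hper.image_uIcc one_ne_zero 0]
    exact isCompact_uIcc.image hK.continuous
  have hbdd : BddAbove (Set.range fun w : Γ => |h ↑w|) := by
    rw [show (fun w : Γ => |h ↑w|) = (fun z => |h z|) ∘ (Subtype.val) from rfl,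
      Set.range_comp, Subtype.range_coe]
    exact hΓcomp.bddAbove_image hh.abs
  set M := ⨆ w : Γ, |h ↑w| with hM
  have hMle : ∀ w ∈ Γ, |h w| ≤ M := fun w hw => le_ciSup hbdd ⟨w, hw⟩
  have hM0 : 0 ≤ M := by
    obtain ⟨w₀, hw₀⟩ : Γ.Nonempty := ⟨γ 0, hΓeq ▸ Set.mem_range_self 0⟩
    exact le_trans (abs_nonneg _) (hMle _ hw₀)
  have hA := comparison D Γ hDo hΓD ψ (fun z => g z + ε * h z) (fun z => g z + 0 * h z)
    (v ε) (v 0) (ε * M) (by positivity) (hv ε hε) (hv 0 le_rfl)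
    (fun z hz => by
      show g z + ε * h z ≤ g z + 0 * h z + ε * M
      nlinarith [mul_nonneg hε (sub_nonneg.mpr (le_trans (le_abs_self (h z)) (hMle z hz)))])
  have hB := comparison D Γ hDo hΓD ψ (fun z => g z + 0 * h z) (fun z => g z + ε * h z)
    (v 0) (v ε) (ε * M) (by positivity) (hv 0 le_rfl) (hv ε hε)
    (fun z hz => by
      show g z + 0 * h z ≤ g z + ε * h z + ε * M
      nlinarith [mul_nonneg hε (by linarith [neg_abs_le (h z), hMle z hz] : (0:ℝ) ≤ h z + M)])
  intro z hz
  rw [abs_sub_le_iff]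
  exact ⟨by linarith [hA z hz], by linarith [hB z hz]⟩

end RandomZeros
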